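/- arXiv:2108.00285 — 6 statements merged into one kernel-verified Lean document; each statement's English description precedes it below -/
import Mathlib

section
/- Let μ be a finite Borel measure on three-dimensional Euclidean space, let ε > 0, and let x* be a point such that for μ-almost every y one has ‖x* − y‖ ≥ ε. Let (x_k) be a sequence of points converging to x*, let (α_k) be a sequence in (0,1) converging to 0, and let (c_k) be real numbers satisfying 0 ≤ c_k ≤ ∫ K(‖x_k − y‖, α_k) dμ(y) for every k. Then c_k → 0 as k → ∞. (This is Case I of the paper's kernel-relaxation lemma: away from the robot surface, the kernel-integral bound forces the normal contact force to vanish in the limit.) -/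
open MeasureTheory Filter Real

/-- The relaxed kernel function `K(r, α) = -1 / (2π · log α · (r² + α²))`. -/
noncomputable def kernelK (r α : ℝ) : ℝ :=
  -1 / (2 * Real.pi * Real.log α * (r ^ 2 + α ^ 2))

lemma kernelK_rewrite (r α : ℝ) :
    kernelK r α = 1 / (2 * Real.pi * (-Real.log α) * (r ^ 2 + α ^ 2)) := by
  unfold kernelK
  rw [neg_div, ← div_neg]
  congr 1
  ring

lemma kernelK_le {r α d : ℝ} (hα : α ∈ Set.Ioo (0 : ℝ) 1) (hd : 0 < d)
    (h : d ≤ r ^ 2 + α ^ 2) :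
    kernelK r α ≤ 1 / (2 * Real.pi * (-Real.log α) * d) := by
  have hlog : 0 < -Real.log α := by
    have := Real.log_neg hα.1 hα.2; linarith
  have h2π : (0 : ℝ) < 2 * Real.pi * (-Real.log α) := by
    have := Real.pi_pos; nlinarith
  rw [kernelK_rewrite]
  apply one_div_le_one_div_of_le (by positivity)
  exact mul_le_mul_of_nonneg_left h h2π.le

lemma kernelK_nonneg {r α : ℝ} (hα : α ∈ Set.Ioo (0 : ℝ) 1) :
    0 ≤ kernelK r α := by
  have hlog : 0 < -Real.log α := by
    have := Real.log_neg hα.1 hα.2; linarith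
  have hsum : 0 < r ^ 2 + α ^ 2 := by nlinarith [sq_nonneg r, hα.1]
  rw [kernelK_rewrite]
  have := Real.pi_pos
  positivity

/-- **Case I of the kernel-relaxation lemma.**
If `x*` is at distance at least `ε > 0` from `μ`-almost every point `y`, then any
normal-force magnitudes `c k` bounded by the kernel integrals
`∫ K(‖x k − y‖, α k) dμ(y)` (with `x k → x*` and `α k → 0` in `(0,1)`) tend to `0`. -/
theorem kernel_integral_bound_tendsto_zero
    (μ : Measure (EuclideanSpace ℝ (Fin 3))) [IsFiniteMeasure μ]
    (ε : ℝ) (hε : 0 < ε) (xstar : EuclideanSpace ℝ (Fin 3))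
    (hfar : ∀ᵐ y ∂μ, ε ≤ ‖xstar - y‖)
    (x : ℕ → EuclideanSpace ℝ (Fin 3)) (hx : Tendsto x atTop (nhds xstar))
    (α : ℕ → ℝ) (hαmem : ∀ k, α k ∈ Set.Ioo (0 : ℝ) 1)
    (hα : Tendsto α atTop (nhds 0))
    (c : ℕ → ℝ)
    (hc : ∀ k, 0 ≤ c k ∧ c k ≤ ∫ y, kernelK (‖x k - y‖) (α k) ∂μ) :
    Tendsto c atTop (nhds 0) := by
  set M : ℝ := (μ Set.univ).toReal with hM
  have hM0 : 0 ≤ M := ENNReal.toReal_nonneg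
  set L : ℕ → ℝ := fun k => -Real.log (α k) with hLdef
  have hLpos : ∀ k, 0 < L k := fun k => by
    have := Real.log_neg (hαmem k).1 (hαmem k).2; simp only [hLdef]; linarith
  -- L k → ∞
  have hLtop : Tendsto L atTop atTop := by
    have hαin : Tendsto α atTop (nhdsWithin 0 (Set.Ioi (0 : ℝ))) :=
      tendsto_nhdsWithin_of_tendsto_nhds_of_eventually_within _ hα
        (Eventually.of_forall fun k => (hαmem k).1)
    have hlogbot : Tendsto (fun k => Real.log (α k)) atTop atBot :=
      Real.tendsto_log_nhdsGT_zero.comp hαin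
    exact tendsto_neg_atBot_atTop.comp hlogbot
  have hd : (0 : ℝ) < (ε / 2) ^ 2 := by positivity
  -- the upper bound sequence tends to 0
  set B : ℕ → ℝ := fun k => 1 / (2 * Real.pi * L k * (ε / 2) ^ 2) * M with hB
  have hBtend : Tendsto B atTop (nhds 0) := by
    have h1 : Tendsto (fun k => (L k)⁻¹) atTop (nhds 0) :=
      hLtop.inv_tendsto_atTop
    have h2 := h1.const_mul (M / (2 * Real.pi * (ε / 2) ^ 2))
    rw [mul_zero] at h2
    exact h2.congr fun k => by simp only [hB]; ring
  have hclose : ∀ᶠ k in atTop, dist (x k) xstar < ε / 2 :=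
    Metric.tendsto_nhds.mp hx (ε / 2) (by positivity)
  have hEvLe : ∀ᶠ k in atTop, c k ≤ B k := by
    filter_upwards [hclose] with k hk
    have hbound : ‖∫ y, kernelK (‖x k - y‖) (α k) ∂μ‖ ≤
        1 / (2 * Real.pi * L k * (ε / 2) ^ 2) * M := by
      apply norm_integral_le_of_norm_le_const
      filter_upwards [hfar] with y hy
      have hr : ε / 2 ≤ ‖x k - y‖ := by
        have htri : ‖xstar - y‖ ≤ ‖xstar - x k‖ + ‖x k - y‖ := by
          have := norm_add_le (xstar - x k) (x k - y)
          simpa using this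
        have hdist : ‖xstar - x k‖ < ε / 2 := by
          rw [← dist_eq_norm, dist_comm]; exact hk
        linarith
      have hle : kernelK (‖x k - y‖) (α k) ≤
          1 / (2 * Real.pi * L k * (ε / 2) ^ 2) := by
        apply kernelK_le (hαmem k) hd
        nlinarith [norm_nonneg (x k - y), sq_nonneg (α k)]
      rw [Real.norm_eq_abs, abs_of_nonneg (kernelK_nonneg (hαmem k))]
      exact hle
    calc c k ≤ ∫ y, kernelK (‖x k - y‖) (α k) ∂μ := (hc k).2
      _ ≤ ‖∫ y, kernelK (‖x k - y‖) (α k) ∂μ‖ := le_abs_self _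
      _ ≤ B k := hbound
  exact tendsto_of_tendsto_of_tendsto_of_le_of_le' tendsto_const_nhds hBtend
    (Eventually.of_forall fun k => (hc k).1) hEvLe
end

section
/- For every δ > 0, the integral over the two-dimensional Euclidean ball of radius δ centered at the origin, ∫_{‖y‖ < δ} ( −1 / (2π · log(α) · (‖y‖² + α²)) ) dy (with respect to two-dimensional Lebesgue measure), tends to 1 as α tends to 0 from within (0,1). (This is the two-dimensional form of Case II of the paper's kernel-relaxation lemma: the kernel integral over a small planar disk around the touching point tends to 1.) -/
/-! In polar coordinates the disk integral becomes
`−1/(2π log α) · 2π ∫₀^δ r/(r² + α²) dr = (log(δ² + α²) − 2 log α) / (−2 log α)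
  = 1 − log(δ² + α²) / (2 log α)`.
As `α → 0⁺` the numerator `log(δ² + α²)` tends to the finite value `log δ²` while
`log α → −∞`, so the quotient vanishes and the integral tends to `1`. -/

open MeasureTheory Filter Real Set Metric

section Radial

variable {E F : Type*} [NormedAddCommGroup E] [NormedSpace ℝ E] [FiniteDimensional ℝ E]
  [Nontrivial E] [MeasurableSpace E] [BorelSpace E] [NormedAddCommGroup F] [NormedSpace ℝ F]

theorem MeasureTheory.setIntegral_ball_fun_norm_addHaar (μ : Measure E) [μ.IsAddHaarMeasure]
    (f : ℝ → F) {R : ℝ} (hR : 0 ≤ R) :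
    ∫ x in ball (0 : E) R, f ‖x‖ ∂μ = Module.finrank ℝ E • μ.real (ball 0 1) •
      ∫ r in 0..R, r ^ (Module.finrank ℝ E - 1) • f r := by
  have h_indicator : (ball (0 : E) R).indicator (fun x ↦ f ‖x‖) =
      fun x ↦ (Iio R).indicator f ‖x‖ := by
    ext x
    simp only [indicator, mem_ball_zero_iff, mem_Iio]
  rw [← integral_indicator measurableSet_ball, h_indicator, integral_fun_norm_addHaar,
    intervalIntegral.integral_of_le hR, integral_Ioc_eq_integral_Ioo,
    ← Iio_inter_Ioi, ← Measure.restrict_restrict measurableSet_Iio,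
    ← integral_indicator measurableSet_Iio]
  simp only [indicator_smul_apply]

theorem EuclideanSpace.setIntegral_ball_fin_two_fun_norm (f : ℝ → F) {R : ℝ} (hR : 0 ≤ R) :
    ∫ x in ball (0 : EuclideanSpace ℝ (Fin 2)) R, f ‖x‖ =
      (2 * π) • ∫ r in 0..R, r • f r := by
  rw [setIntegral_ball_fun_norm_addHaar volume f hR, finrank_euclideanSpace_fin, measureReal_def,
    EuclideanSpace.volume_ball_fin_two]
  simp [pi_nonneg, ← smul_smul, ofNat_smul_eq_nsmul]

end Radial

theorem integral_id_div_sq_add_sq {a : ℝ} (ha : a ≠ 0) (R : ℝ) :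
    ∫ r in 0..R, r / (r ^ 2 + a ^ 2) = log (R ^ 2 + a ^ 2) / 2 - log a := by
  have hpos : ∀ r : ℝ, 0 < r ^ 2 + a ^ 2 := fun r ↦ by positivity
  have h_deriv : ∀ r ∈ uIcc 0 R,
      HasDerivAt (fun r ↦ log (r ^ 2 + a ^ 2) / 2) (r / (r ^ 2 + a ^ 2)) r := by
    intro r _
    have h_sq : HasDerivAt (fun r : ℝ ↦ r ^ 2 + a ^ 2) (2 * r) r := by
      simpa using (hasDerivAt_pow 2 r).add_const (a ^ 2)
    refine ((h_sq.log (hpos r).ne').div_const 2).congr_deriv ?_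
    field_simp
  have h_cont : Continuous fun r : ℝ ↦ r / (r ^ 2 + a ^ 2) :=
    continuous_id.div (by fun_prop) fun r ↦ (hpos r).ne'
  rw [intervalIntegral.integral_eq_sub_of_hasDerivAt h_deriv (h_cont.intervalIntegrable _ _),
    zero_pow two_ne_zero, zero_add, log_pow]
  ring

theorem kernel_disk_integral_eq {δ α : ℝ} (hδ : 0 ≤ δ) (hα : log α ≠ 0) :
    ∫ y in ball (0 : EuclideanSpace ℝ (Fin 2)) δ, -1 / (2 * π * log α * (‖y‖ ^ 2 + α ^ 2)) =
      1 - log (δ ^ 2 + α ^ 2) / (2 * log α) := by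
  have hα₀ : α ≠ 0 := by rintro rfl; exact hα log_zero
  have h_split : ∀ y : EuclideanSpace ℝ (Fin 2),
      -1 / (2 * π * log α * (‖y‖ ^ 2 + α ^ 2)) =
        -1 / (2 * π * log α) * (1 / (‖y‖ ^ 2 + α ^ 2)) := fun y ↦ by
    rw [div_mul_div_comm, mul_one]
  simp_rw [h_split, integral_const_mul]
  rw [EuclideanSpace.setIntegral_ball_fin_two_fun_norm (fun r ↦ 1 / (r ^ 2 + α ^ 2)) hδ]
  simp_rw [smul_eq_mul, ← div_eq_mul_one_div, integral_id_div_sq_add_sq hα₀]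
  field_simp
  ring

/-- **Two-dimensional form of Case II of the kernel-relaxation lemma.**
For every `δ > 0`, the integral of the kernel
`K(‖y‖, α) = −1 / (2π · log α · (‖y‖² + α²))` over the planar disk of radius `δ`
tends to `1` as `α → 0` within `(0,1)`. -/
theorem kernel_disk_integral_tendsto_one (δ : ℝ) (hδ : 0 < δ) :
    Tendsto (fun α : ℝ => ∫ y in Metric.ball (0 : EuclideanSpace ℝ (Fin 2)) δ,
        -1 / (2 * Real.pi * Real.log α * (‖y‖ ^ 2 + α ^ 2)))
      (nhdsWithin 0 (Set.Ioo (0 : ℝ) 1)) (nhds 1) := by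
  have h_log : Tendsto log (nhdsWithin 0 (Ioo 0 1)) atBot :=
    tendsto_log_nhdsGT_zero.mono_left (nhdsWithin_mono _ Ioo_subset_Ioi_self)
  have h_num : Tendsto (fun α : ℝ ↦ log (δ ^ 2 + α ^ 2)) (nhdsWithin 0 (Ioo 0 1))
      (nhds (log (δ ^ 2 + 0 ^ 2))) :=
    ((continuousAt_log (by positivity)).comp (by fun_prop)).tendsto.mono_left nhdsWithin_le_nhds
  have h_eq : (fun α : ℝ ↦ 1 - log (δ ^ 2 + α ^ 2) / (2 * log α)) =ᶠ[nhdsWithin 0 (Ioo 0 1)]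
      fun α ↦ ∫ y in ball (0 : EuclideanSpace ℝ (Fin 2)) δ,
        -1 / (2 * π * log α * (‖y‖ ^ 2 + α ^ 2)) :=
    eventually_nhdsWithin_of_forall fun α hα ↦
      (kernel_disk_integral_eq hδ.le (log_neg hα.1 hα.2).ne).symm
  simpa using
    (tendsto_const_nhds.sub (h_num.div_atBot (h_log.const_mul_atBot two_pos))).congr' h_eq
end

section
/- For every α > 0 and all points x, y, c in three-dimensional Euclidean space, the series indexed by multi-indices n = (n₁, n₂, n₃) ∈ ℕ³ with term (1/n!) · ((y − c)/√α)ⁿ · h_n((x − c)/√α) converges (in the sense of unconditional summability over ℕ³) and its sum equals exp(−‖y − x‖²/α). (This is the three-dimensional tensor-product Hermite expansion used in the Multipole-to-Multipole (M2M) step of the Fast Gauss Transform.) -/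
open Real

/-- The Hermite function `h_n(t) = (−1)ⁿ · (dⁿ/dtⁿ) exp(−t²)`. -/
noncomputable def hermiteFun (n : ℕ) (t : ℝ) : ℝ :=
  (-1) ^ n * iteratedDeriv n (fun s : ℝ => Real.exp (-s ^ 2)) t

/-!
Since `exp (-z²)` is entire, its Taylor series at `s` converges everywhere; evaluated at `s - t`
it reads `∑ₙ tⁿ hₙ(s) / n! = exp (-(s - t)²)`. The Gaussian `exp (-‖r‖²)` is the product of its
one-dimensional factors, and in `ℝ` unconditionally convergent series are absolutely convergent,
so the product of the one-dimensional expansions is summable over multi-indices with the product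
of their sums.
-/

open Nat

theorem iteratedDeriv_ofReal_of_entire {F : ℂ → ℂ} {f : ℝ → ℝ} (hF : Differentiable ℂ F)
    (hFf : ∀ x : ℝ, F x = f x) (n : ℕ) (x : ℝ) :
    iteratedDeriv n F x = (iteratedDeriv n f x : ℝ) := by
  induction n generalizing x with
  | zero => simpa using hFf x
  | succ n ih =>
    have hC : HasDerivAt (iteratedDeriv n F) (iteratedDeriv (n + 1) F x) x := by
      rw [iteratedDeriv_succ]
      exact ((hF.contDiff (n := ⊤)).differentiable_iteratedDeriv n (by simp) _).hasDerivAt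
    have hre : HasDerivAt (iteratedDeriv n f) (iteratedDeriv (n + 1) F x).re x := by
      simpa only [ih, Complex.ofReal_re] using hC.real_of_complex
    have hof : HasDerivAt (fun y : ℝ => ((iteratedDeriv n f y : ℝ) : ℂ))
        (iteratedDeriv (n + 1) F x) x := by
      simpa only [ih] using hC.comp_ofReal
    rw [iteratedDeriv_succ (f := f), hre.deriv]
    exact hof.unique hre.ofReal_comp

theorem hasSum_taylorSeries_of_entire_ofReal {F : ℂ → ℂ} {f : ℝ → ℝ} (hF : Differentiable ℂ F)
    (hFf : ∀ x : ℝ, F x = f x) (x y : ℝ) :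
    HasSum (fun n : ℕ => (n ! : ℝ)⁻¹ * (y - x) ^ n * iteratedDeriv n f x) (f y) := by
  have hC := Complex.hasSum_taylorSeries_of_entire hF x y
  simp only [iteratedDeriv_ofReal_of_entire hF hFf, hFf, smul_eq_mul] at hC
  rw [← Complex.hasSum_ofReal]
  push_cast
  simpa only [mul_assoc] using hC

theorem hasSum_hermiteFun_mul_pow (s t : ℝ) :
    HasSum (fun n : ℕ => 1 / (n ! : ℝ) * t ^ n * hermiteFun n s) (exp (-(s - t) ^ 2)) := by
  have hF : Differentiable ℂ fun z : ℂ => Complex.exp (-z ^ 2) := by fun_prop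
  convert hasSum_taylorSeries_of_entire_ofReal hF (f := fun u => exp (-u ^ 2))
    (by intro x; push_cast; rfl) s (s - t) using 2 with n
  rw [hermiteFun, sub_sub_cancel_left, neg_pow]
  ring

theorem HasSum.mul_real {α β : Type*} {f : α → ℝ} {g : β → ℝ} {a b : ℝ}
    (hf : HasSum f a) (hg : HasSum g b) :
    HasSum (fun p : α × β => f p.1 * g p.2) (a * b) :=
  hf.mul hg (summable_mul_of_summable_norm hf.summable.norm hg.summable.norm)

theorem hasSum_fin_prod {β : Type*} {k : ℕ} {f : Fin k → β → ℝ} {a : Fin k → ℝ}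
    (hf : ∀ i, HasSum (f i) (a i)) :
    HasSum (fun n : Fin k → β => ∏ i, f i (n i)) (∏ i, a i) := by
  induction k with
  | zero => simp
  | succ k ih =>
    have hcons : (fun n => ∏ i, f i (n i)) ∘ Fin.consEquiv (fun _ => β) =
        fun p => f 0 p.1 * ∏ i, f i.succ (p.2 i) := by
      ext p
      simp [Fin.prod_univ_succ]
    have h := (hf 0).mul_real (ih fun i => hf i.succ)
    rw [← hcons, ← Fin.prod_univ_succ (f := a)] at h
    exact (Fin.consEquiv fun _ => β).hasSum_iff.mp h

theorem hasSum_prod_hermiteFun {d : ℕ} (s t : Fin d → ℝ) :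
    HasSum (fun n : Fin d → ℕ => (1 / ∏ i, ((n i)! : ℝ)) * (∏ i, t i ^ n i) *
      ∏ i, hermiteFun (n i) (s i)) (exp (-∑ i, (s i - t i) ^ 2)) := by
  rw [← Finset.sum_neg_distrib, Real.exp_sum]
  convert hasSum_fin_prod fun i => hasSum_hermiteFun_mul_pow (s i) (t i) using 1
  ext n
  simp only [Finset.prod_mul_distrib, Finset.prod_div_distrib, Finset.prod_const_one]

/-- **Three-dimensional tensor-product Hermite expansion (M2M step of the FGT).**
For `α > 0` and `x, y, c ∈ ℝ³`, the family indexed by multi-indices `n ∈ ℕ³` with term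
`(1/n!)·((y−c)/√α)ⁿ·h_n((x−c)/√α)` is unconditionally summable with sum
`exp(−‖y−x‖²/α)`, where `n! = n₁!n₂!n₃!`, `rⁿ = ∏ rᵢ^{nᵢ}`, `h_n(r) = ∏ h_{nᵢ}(rᵢ)`. -/
theorem hermite_expansion_m2m_3d (α : ℝ) (hα : 0 < α)
    (x y c : EuclideanSpace ℝ (Fin 3)) :
    HasSum (fun n : Fin 3 → ℕ =>
        (1 / ∏ i, ((n i).factorial : ℝ)) *
          (∏ i, ((y i - c i) / Real.sqrt α) ^ (n i)) *
          (∏ i, hermiteFun (n i) ((x i - c i) / Real.sqrt α)))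
      (Real.exp (-‖y - x‖ ^ 2 / α)) := by
  convert hasSum_prod_hermiteFun (fun i => (x i - c i) / √α) (fun i => (y i - c i) / √α)
    using 3
  rw [EuclideanSpace.real_norm_sq_eq, neg_div, Finset.sum_div]
  congr 1
  refine Finset.sum_congr rfl fun i _ => ?_
  rw [div_sub_div_same, div_pow, sq_sqrt hα.le, PiLp.sub_apply]
  ring
end

section
/- For every α > 0 and all real numbers x, y, c, the derivative with respect to y of the function y ↦ exp(−((y − x)/√α)²) equals the sum of the convergent series with n-th term (2/(√α · n!)) · [ ((y − c)/√α)ⁿ · ((x − c)/√α) · h_n((x − c)/√α) − ((y − c)/√α)^{n+1} · h_n((x − c)/√α) ]. (This is the Hermite expansion of the source-point gradient of the Gaussian kernel, the extra expansion derived by the paper to evaluate the Jacobian ∂G^d/∂θ within the Fast Gauss Transform M2M step.) -/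
open Real

open scoped Nat

namespace Complex

theorem iteratedDeriv_re_comp_ofReal {f : ℂ → ℂ} (hf : Differentiable ℂ f) (n : ℕ) :
    iteratedDeriv n (fun t : ℝ => (f t).re) = fun t : ℝ => (iteratedDeriv n f t).re := by
  induction n with
  | zero => simp
  | succ n ih =>
    funext t
    rw [iteratedDeriv_succ, ih, iteratedDeriv_succ]
    exact ((hf.contDiff.differentiable_iteratedDeriv n (WithTop.coe_lt_top _)) t).hasDerivAt
      |>.real_of_complex.deriv

theorem hasSum_taylorSeries_re_of_entire {f : ℂ → ℂ} (hf : Differentiable ℂ f) (c x : ℝ) :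
    HasSum (fun n : ℕ => (x - c) ^ n / n ! * iteratedDeriv n (fun t : ℝ => (f t).re) c)
      (f x).re := by
  convert hasSum_re (hasSum_taylorSeries_of_entire hf c x) using 2 with n
  rw [iteratedDeriv_re_comp_ofReal hf, smul_eq_mul, smul_eq_mul, ← mul_assoc, ← ofReal_sub,
    ← ofReal_pow, ← ofReal_natCast, ← ofReal_inv, ← ofReal_mul, re_ofReal_mul, div_eq_inv_mul]

end Complex

theorem hasSum_pow_div_factorial_mul_hermiteFun (s u : ℝ) :
    HasSum (fun n : ℕ => u ^ n / n ! * hermiteFun n s) (Real.exp (-(s - u) ^ 2)) := by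
  have hf : Differentiable ℂ (fun z : ℂ => Complex.exp (-(s - z) ^ 2)) := by fun_prop
  have hre (t : ℝ) : (Complex.exp (-(s - t) ^ 2)).re = Real.exp (-(s - t) ^ 2) := by
    rw [← Complex.ofReal_sub, ← Complex.ofReal_pow, ← Complex.ofReal_neg, Complex.exp_ofReal_re]
  have hderiv (n : ℕ) :
      iteratedDeriv n (fun t : ℝ => Real.exp (-(s - t) ^ 2)) 0 = hermiteFun n s := by
    rw [congrFun (iteratedDeriv_comp_const_sub n (fun t => Real.exp (-t ^ 2)) s) 0, sub_zero,
      smul_eq_mul, hermiteFun]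
  simpa only [hre, hderiv, sub_zero] using Complex.hasSum_taylorSeries_re_of_entire hf 0 u

theorem hermite_expansion_m2m_gradient_general (α : ℝ) (x y c : ℝ) :
    ∃ S : ℝ,
      HasSum (fun n : ℕ =>
          (2 / (Real.sqrt α * (n.factorial : ℝ))) *
            (((y - c) / Real.sqrt α) ^ n * ((x - c) / Real.sqrt α) *
                hermiteFun n ((x - c) / Real.sqrt α) -
              ((y - c) / Real.sqrt α) ^ (n + 1) *
                hermiteFun n ((x - c) / Real.sqrt α))) S ∧
      HasDerivAt (fun y' : ℝ => Real.exp (-((y' - x) / Real.sqrt α) ^ 2)) S y := by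
  set σ := Real.sqrt α
  set s := (x - c) / σ
  set u := (y - c) / σ
  refine ⟨2 / σ * (s - u) * Real.exp (-(s - u) ^ 2), ?_, ?_⟩
  · refine ((hasSum_pow_div_factorial_mul_hermiteFun s u).mul_left (2 / σ * (s - u))).congr_fun
      fun n => ?_
    ring
  · have hscaled : HasDerivAt (fun y' : ℝ => (y' - x) / σ) (1 / σ) y := by
      simpa using ((hasDerivAt_id y).sub_const x).div_const σ
    have hshift : (y - x) / σ = -(s - u) := by
      simp only [s, u]
      ring
    convert hscaled.pow 2 |>.neg.exp using 1
    · rfl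
    simp only [Pi.neg_apply, Pi.pow_apply, hshift, neg_sq]
    push_cast
    ring

/-- **Hermite expansion of the source-point gradient of the Gaussian kernel**
(the extra expansion for the Jacobian `∂G^d/∂θ` in the FGT M2M step).
The `y`-derivative of `y ↦ exp(−((y−x)/√α)²)` equals the sum of the convergent series
with `n`-th term
`(2/(√α·n!))·[((y−c)/√α)ⁿ·((x−c)/√α)·h_n((x−c)/√α) − ((y−c)/√α)^{n+1}·h_n((x−c)/√α)]`. -/
theorem hermite_expansion_m2m_gradient (α : ℝ) (hα : 0 < α) (x y c : ℝ) :
    ∃ S : ℝ,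
      HasSum (fun n : ℕ =>
          (2 / (Real.sqrt α * (n.factorial : ℝ))) *
            (((y - c) / Real.sqrt α) ^ n * ((x - c) / Real.sqrt α) *
                hermiteFun n ((x - c) / Real.sqrt α) -
              ((y - c) / Real.sqrt α) ^ (n + 1) *
                hermiteFun n ((x - c) / Real.sqrt α))) S ∧
      HasDerivAt (fun y' : ℝ => Real.exp (-((y' - x) / Real.sqrt α) ^ 2)) S y :=
  hermite_expansion_m2m_gradient_general α x y c
end

section
/- For every n ∈ ℕ and all real numbers u and v, the series with m-th term ((−1)^m/m!) · (u − v)^m · h_{n+m}(v) converges and its sum equals h_n(u). (This Taylor re-expansion of the Hermite functions about a new center is the identity underlying the Multipole-to-Local (M2L) step of the Fast Gauss Transform.) -/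
/-!
Up to the sign `(−1)ⁿ`, `h_n` is the `n`-th derivative of the Gaussian, so its `m`-th Taylor
coefficient at `v` is `(−1)^m h_{n+m}(v) / m!`. The Taylor series converges on all of `ℝ` because
the Gaussian is the restriction of the entire function `exp(−z²)`, whose Taylor series converges
everywhere, and complex derivatives of an entire function that is real on `ℝ` restrict to the real
derivatives of its restriction.
-/

open Real

open scoped Nat

theorem iteratedDeriv_iteratedDeriv {𝕜 F : Type*} [NontriviallyNormedField 𝕜]
    [NormedAddCommGroup F] [NormedSpace 𝕜 F] (m n : ℕ) (f : 𝕜 → F) :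
    iteratedDeriv m (iteratedDeriv n f) = iteratedDeriv (m + n) f := by
  simp only [iteratedDeriv_eq_iterate, Function.iterate_add]
  rfl

section RealRestriction

variable {f : ℂ → ℂ} {g : ℝ → ℝ}

theorem DifferentiableAt.deriv_ofReal_eq {x : ℝ} (hf : DifferentiableAt ℂ f x)
    (hfg : ∀ y : ℝ, f y = g y) : deriv f x = deriv g x := by
  have hf' : HasDerivAt (fun y : ℝ => (g y : ℂ)) (deriv f x) x := by
    simpa only [hfg] using hf.hasDerivAt.comp_ofReal
  have hg : HasDerivAt g (deriv f x).re x := by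
    simpa only [hfg, Complex.ofReal_re] using hf.hasDerivAt.real_of_complex
  rw [hg.deriv]
  exact hf'.unique hg.ofReal_comp

theorem Differentiable.iteratedDeriv_ofReal_eq (hf : Differentiable ℂ f)
    (hfg : ∀ y : ℝ, f y = g y) (m : ℕ) (x : ℝ) :
    iteratedDeriv m f x = iteratedDeriv m g x := by
  induction m generalizing f g with
  | zero => simpa using hfg x
  | succ m ih =>
    rw [iteratedDeriv_succ', iteratedDeriv_succ']
    exact ih hf.deriv fun y => (hf y).deriv_ofReal_eq hfg

theorem Differentiable.hasSum_taylorSeries_ofReal (hf : Differentiable ℂ f)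
    (hfg : ∀ y : ℝ, f y = g y) (u v : ℝ) :
    HasSum (fun m : ℕ => (m ! : ℝ)⁻¹ * (u - v) ^ m * iteratedDeriv m g v) (g u) := by
  have h := Complex.hasSum_taylorSeries_of_entire hf v u
  simp only [hfg, hf.iteratedDeriv_ofReal_eq hfg, smul_eq_mul] at h
  rw [← Complex.hasSum_ofReal]
  push_cast
  simpa only [mul_assoc] using h

end RealRestriction

theorem hasSum_taylorSeries_iteratedDeriv_gaussian (n : ℕ) (u v : ℝ) :
    HasSum (fun m : ℕ => (m ! : ℝ)⁻¹ * (u - v) ^ m *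
        iteratedDeriv (m + n) (fun s : ℝ => Real.exp (-s ^ 2)) v)
      (iteratedDeriv n (fun s : ℝ => Real.exp (-s ^ 2)) u) := by
  have hF : Differentiable ℂ fun z : ℂ => Complex.exp (-z ^ 2) := by fun_prop
  have hFG (x : ℝ) : Complex.exp (-(x : ℂ) ^ 2) = (Real.exp (-x ^ 2) : ℂ) := by
    push_cast
    rfl
  simpa only [iteratedDeriv_iteratedDeriv] using
    (hF.contDiff.differentiable_iteratedDeriv n (WithTop.coe_lt_top _)).hasSum_taylorSeries_ofReal
      (hF.iteratedDeriv_ofReal_eq hFG n) u v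

/-- **Taylor re-expansion of Hermite functions about a new center (M2L identity).**
For every `n ∈ ℕ` and reals `u, v`, the series with `m`-th term
`((−1)^m/m!)·(u−v)^m·h_{n+m}(v)` converges with sum `h_n(u)`. -/
theorem hermite_taylor_reexpansion (n : ℕ) (u v : ℝ) :
    HasSum (fun m : ℕ =>
        ((-1) ^ m / (m.factorial : ℝ)) * (u - v) ^ m * hermiteFun (n + m) v)
      (hermiteFun n u) := by
  refine ((hasSum_taylorSeries_iteratedDeriv_gaussian n u v).mul_left ((-1) ^ n)).congr_fun
    fun m => ?_
  have hsign : (-1 : ℝ) ^ m * (-1) ^ (m + n) = (-1) ^ n := by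
    rw [pow_add, ← mul_assoc, ← mul_pow]
    norm_num
  rw [hermiteFun, add_comm n m, div_eq_mul_inv, ← hsign]
  ring
end

section
/- Let L : ℝᵏ → ℝ and G_d : ℝᵏ → ℝ for d in a finite index set D be functions differentiable at a point θ, let Q, ΔQ ∈ ℝ, Δθ ∈ ℝᵏ, γ ∈ (0,1), and suppose the linearized constraints Q + ΔQ ≤ G_d(θ) + DG_d(θ)[Δθ] hold for every d ∈ D. Set V := Σ_{d ∈ D} |min(0, G_d(θ) − Q)| and assume V > 0 and ρ ≥ (DL(θ)[Δθ] − ΔQ) / ((1 − γ)·V) with ρ ≥ 0. Then, with φ(ϑ, q) := L(ϑ) − q + ρ · Σ_{d ∈ D} |min(0, G_d(ϑ) − q)|, one has limsup_{t → 0⁺} (φ(θ + tΔθ, Q + tΔQ) − φ(θ, Q))/t ≤ −γ·ρ·V. (This shows that the paper's rule for increasing the penalty weight ρ makes the SQP step a descent direction of the l₁-merit function.) -/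
open Filter

open Set in
lemma psi_quot_tendsto (h : ℝ → ℝ) (b : ℝ) (hh : HasDerivAt h b 0)
    (hb : 0 ≤ h 0 + b) :
    Tendsto (fun t => (|min 0 (h t)| - |min 0 (h 0)|) / t) (nhdsWithin 0 (Set.Ioi (0:ℝ)))
      (nhds (if h 0 < 0 then -b else 0)) := by
  have hS : Tendsto (fun t => (h t - h 0) / t) (nhdsWithin 0 (Set.Ioi (0:ℝ))) (nhds b) := by
    have h1 := hasDerivAt_iff_tendsto_slope.mp hh
    have h2 := h1.mono_left (nhdsWithin_mono 0 (fun x hx => by simpa using ne_of_gt hx))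
    refine h2.congr (fun t => ?_)
    simp [slope_def_field]
  have hcont : ContinuousAt h 0 := hh.continuousAt
  rcases lt_trichotomy (h 0) 0 with ha | ha | ha
  · -- negative case: eventually h t < 0
    rw [if_pos ha]
    have hev : ∀ᶠ t in nhdsWithin 0 (Set.Ioi (0:ℝ)), h t < 0 :=
      eventually_nhdsWithin_of_eventually_nhds (hcont.eventually_lt_const ha)
    refine hS.neg.congr' (hev.mono fun t ht => ?_)
    show -((h t - h 0) / t) = (|min 0 (h t)| - |min 0 (h 0)|) / t
    rw [min_eq_right ht.le, min_eq_right ha.le, abs_of_neg ht, abs_of_neg ha]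
    ring
  · -- zero case: b ≥ 0; squeeze
    rw [if_neg (by simp [ha])]
    have hb' : 0 ≤ b := by linarith
    have habs : Tendsto (fun t => |(h t - h 0) / t - b|) (nhdsWithin 0 (Set.Ioi (0:ℝ))) (nhds 0) := by
      have := (hS.sub_const b).abs
      simpa using this
    refine tendsto_of_tendsto_of_tendsto_of_le_of_le' tendsto_const_nhds habs ?_ ?_
    · filter_upwards [eventually_mem_nhdsWithin] with t ht
      have ht : (0:ℝ) < t := ht
      show 0 ≤ (|min 0 (h t)| - |min 0 (h 0)|) / t
      rw [ha]
      simp only [min_self, abs_zero, sub_zero]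
      exact div_nonneg (abs_nonneg _) ht.le
    · filter_upwards [eventually_mem_nhdsWithin] with t ht
      have ht : (0:ℝ) < t := ht
      show (|min 0 (h t)| - |min 0 (h 0)|) / t ≤ |(h t - h 0) / t - b|
      rw [ha]
      simp only [min_self, abs_zero, sub_zero]
      have key : |min 0 (h t)| ≤ |h t - t * b| := by
        rcases le_or_gt 0 (h t) with hx | hx
        · rw [min_eq_left hx, abs_zero]; exact abs_nonneg _
        · rw [min_eq_right hx.le, abs_of_neg hx]
          have h2 : h t - t * b < 0 := by nlinarith
          rw [abs_of_neg h2]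
          nlinarith
      calc |min 0 (h t)| / t ≤ |h t - t * b| / t := by gcongr
        _ = |(h t - t * b) / t| := by rw [abs_div, abs_of_pos ht]
        _ = |h t / t - b| := by
            rw [sub_div, mul_comm t b, mul_div_assoc, div_self ht.ne', mul_one]
  · -- positive case
    rw [if_neg (by linarith)]
    have hev : ∀ᶠ t in nhdsWithin 0 (Set.Ioi (0:ℝ)), 0 < h t :=
      eventually_nhdsWithin_of_eventually_nhds (hcont.eventually_const_lt ha)
    refine tendsto_const_nhds.congr' (hev.mono fun t ht => ?_)
    show 0 = (|min 0 (h t)| - |min 0 (h 0)|) / t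
    rw [min_eq_left ht.le, min_eq_left ha.le]
    simp

/-- **Descent property of the SQP step for the l₁-merit function.**
With `V := Σ_d |min(0, G_d(θ) − Q)| > 0`, `γ ∈ (0,1)`, and penalty weight
`ρ ≥ (DL(θ)[Δθ] − ΔQ)/((1−γ)·V)` with `ρ ≥ 0`, the upper Dini directional derivative
of the merit function `φ(ϑ,q) = L(ϑ) − q + ρ·Σ_d |min(0, G_d(ϑ) − q)|` at `(θ, Q)`
along `(Δθ, ΔQ)` is at most `−γ·ρ·V`, provided the linearized constraints
`Q + ΔQ ≤ G_d(θ) + DG_d(θ)[Δθ]` hold for all `d`. -/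
theorem merit_function_descent_direction
    {k : ℕ} {D : Type*} [Fintype D]
    (L : (Fin k → ℝ) → ℝ) (G : D → (Fin k → ℝ) → ℝ)
    (θ Δθ : Fin k → ℝ) (Q ΔQ ρ γ : ℝ) (hγ : γ ∈ Set.Ioo (0 : ℝ) 1)
    (L' : (Fin k → ℝ) →L[ℝ] ℝ) (G' : D → (Fin k → ℝ) →L[ℝ] ℝ)
    (hL : HasFDerivAt L L' θ) (hG : ∀ d, HasFDerivAt (G d) (G' d) θ)
    (hlin : ∀ d, Q + ΔQ ≤ G d θ + G' d Δθ)
    (hV : 0 < ∑ d, |min 0 (G d θ - Q)|)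
    (hρ0 : 0 ≤ ρ)
    (hρ : (L' Δθ - ΔQ) / ((1 - γ) * ∑ d, |min 0 (G d θ - Q)|) ≤ ρ) :
    Filter.limsup
      (fun t : ℝ =>
        ((L (θ + t • Δθ) - (Q + t * ΔQ) +
            ρ * ∑ d, |min 0 (G d (θ + t • Δθ) - (Q + t * ΔQ))|) -
          (L θ - Q + ρ * ∑ d, |min 0 (G d θ - Q)|)) / t)
      (nhdsWithin 0 (Set.Ioi (0 : ℝ)))
    ≤ -γ * ρ * ∑ d, |min 0 (G d θ - Q)| := by
  obtain ⟨hγ0, hγ1⟩ := hγ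
  set V : ℝ := ∑ d, |min 0 (G d θ - Q)| with hVdef
  -- the line map and its derivative
  have hg : HasDerivAt (fun t : ℝ => θ + t • Δθ) Δθ 0 := by
    simpa using ((hasDerivAt_id (0:ℝ)).smul_const Δθ).const_add θ
  have hLθ : HasFDerivAt L L' (θ + (0:ℝ) • Δθ) := by simpa using hL
  have hLline : HasDerivAt (fun t : ℝ => L (θ + t • Δθ)) (L' Δθ) 0 :=
    hLθ.comp_hasDerivAt 0 hg
  -- per-d constraint functions
  set h : D → ℝ → ℝ := fun d t => G d (θ + t • Δθ) - (Q + t * ΔQ) with hhdef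
  set b : D → ℝ := fun d => G' d Δθ - ΔQ with hbdef
  have hh : ∀ d, HasDerivAt (h d) (b d) 0 := by
    intro d
    have hGθ : HasFDerivAt (G d) (G' d) (θ + (0:ℝ) • Δθ) := by simpa using hG d
    have h1 : HasDerivAt (fun t : ℝ => G d (θ + t • Δθ)) (G' d Δθ) 0 :=
      hGθ.comp_hasDerivAt 0 hg
    have h2 : HasDerivAt (fun t : ℝ => Q + t * ΔQ) ΔQ 0 :=
      (hasDerivAt_mul_const ΔQ).const_add Q
    exact h1.sub h2
  have hh0 : ∀ d, h d 0 = G d θ - Q := by intro d; simp [hhdef]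
  have hhb : ∀ d, 0 ≤ h d 0 + b d := by
    intro d; rw [hh0]; have := hlin d; simp [hbdef]; linarith
  set c : D → ℝ := fun d => if h d 0 < 0 then -(b d) else 0 with hcdef
  -- per-d tendsto
  have hsum : Tendsto (fun t => ∑ d, (|min 0 (h d t)| - |min 0 (h d 0)|) / t)
      (nhdsWithin 0 (Set.Ioi (0:ℝ))) (nhds (∑ d, c d)) := by
    refine tendsto_finset_sum _ (fun d _ => ?_)
    exact psi_quot_tendsto (h d) (b d) (hh d) (hhb d)
  have hslopeL : Tendsto (fun t => (L (θ + t • Δθ) - L (θ + (0:ℝ) • Δθ)) / t)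
      (nhdsWithin 0 (Set.Ioi (0:ℝ))) (nhds (L' Δθ)) := by
    have h1 := hasDerivAt_iff_tendsto_slope.mp hLline
    have h2 := h1.mono_left (nhdsWithin_mono 0 (fun x hx => by simpa using ne_of_gt hx))
    refine h2.congr (fun t => ?_)
    simp [slope_def_field]
  -- total limit
  have hTend : Tendsto
      (fun t : ℝ =>
        ((L (θ + t • Δθ) - (Q + t * ΔQ) +
            ρ * ∑ d, |min 0 (G d (θ + t • Δθ) - (Q + t * ΔQ))|) -
          (L θ - Q + ρ * ∑ d, |min 0 (G d θ - Q)|)) / t)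
      (nhdsWithin 0 (Set.Ioi (0 : ℝ)))
      (nhds (L' Δθ - ΔQ + ρ * ∑ d, c d)) := by
    have hG2 : Tendsto
        (fun t => (L (θ + t • Δθ) - L (θ + (0:ℝ) • Δθ)) / t - ΔQ
          + ρ * ∑ d, (|min 0 (h d t)| - |min 0 (h d 0)|) / t)
        (nhdsWithin 0 (Set.Ioi (0:ℝ))) (nhds (L' Δθ - ΔQ + ρ * ∑ d, c d)) :=
      (hslopeL.sub_const ΔQ).add (hsum.const_mul ρ)
    refine hG2.congr' ?_
    filter_upwards [eventually_mem_nhdsWithin] with t ht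
    have ht' : (t:ℝ) ≠ 0 := ne_of_gt ht
    have e1 : ∀ d, |min 0 (G d (θ + t • Δθ) - (Q + t * ΔQ))| = |min 0 (h d t)| := by
      intro d; rfl
    have e2 : ∀ d, |min 0 (G d θ - Q)| = |min 0 (h d 0)| := by
      intro d; rw [hh0]
    simp only [e1, e2]
    rw [← Finset.sum_div, Finset.sum_sub_distrib]
    have e3 : L (θ + (0:ℝ) • Δθ) = L θ := by norm_num
    rw [e3]
    field_simp
    ring
  rw [hTend.limsup_eq]
  -- final inequality
  have hsumc : ∑ d, c d ≤ -V := by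
    rw [hVdef, ← Finset.sum_neg_distrib]
    refine Finset.sum_le_sum (fun d _ => ?_)
    rcases lt_or_ge (h d 0) 0 with hd | hd
    · rw [hcdef]
      simp only [if_pos hd]
      have h0 : h d 0 = G d θ - Q := hh0 d
      rw [min_eq_right (by rw [← h0]; exact hd.le), abs_of_neg (by rw [← h0]; exact hd)]
      have h1 := hhb d
      rw [h0] at h1
      simp only [neg_neg]
      linarith
    · rw [hcdef]
      simp only [if_neg (not_lt.mpr hd)]
      have h0 : h d 0 = G d θ - Q := hh0 d
      rw [min_eq_left (by rw [← h0]; exact hd), abs_zero]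
      simp
  have hVγ : 0 < (1 - γ) * V := by
    apply mul_pos; linarith; exact hV
  have hLd : L' Δθ - ΔQ ≤ ρ * ((1 - γ) * V) := by
    have := (div_le_iff₀ hVγ).mp hρ
    linarith
  have hρV : ρ * ∑ d, c d ≤ ρ * (-V) := mul_le_mul_of_nonneg_left hsumc hρ0
  have e : ρ * ((1 - γ) * V) + ρ * (-V) = -γ * ρ * V := by ring
  linarith
end
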